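/- Let n, m be positive natural numbers, T > 0, and k > 0. Let A, A⁻, P' : [0,T] → M_{n×n}(ℝ) with |P'(t)|_F ≤ ‖P'‖_∞ for all t, let f : [0,T] × ℝⁿ → ℝⁿ and g : [0,T] × ℝⁿ → M_{n×m}(ℝ), and suppose the monotone condition holds: for all t ∈ [0,T] and X ∈ ℝⁿ, ⟨A⁻(t)·A(t)·X, A⁻(t)·f(t,X)⟩ + (1/2)·|A⁻(t)·g(t,X)|²_F ≤ k·(1 + ‖X‖²). Let v̂ : [0,T] × ℝⁿ → ℝⁿ be Lipschitz in its second variable with constant L_v ≥ 0 (uniformly in t), with sup_{t∈[0,T]} ‖v̂(t,0)‖ finite, and suppose that for all t ∈ [0,T] and u ∈ ℝⁿ, A⁻(t)·A(t)·(u + v̂(t,u)) = u. Define f̂(t,u) = P'(t)·(u + v̂(t,u)) + A⁻(t)·f(t, u + v̂(t,u)) and ĝ(t,u) = A⁻(t)·g(t, u + v̂(t,u)). Then there exists a constant k₁ > 0 (depending only on k, L_v, ‖P'‖_∞ and sup_{t∈[0,T]} ‖v̂(t,0)‖) such that for all t ∈ [0,T] and u ∈ ℝⁿ, ⟨u, f̂(t,u)⟩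 + (1/2)·|ĝ(t,u)|²_F ≤ k₁·(1 + ‖u‖²). -/

import Mathlib

/-!
Write `X = u + v̂(t,u)`. The projector identity `A⁻(t)A(t)X = u` turns the monotone
condition at `X` into the bound `⟨u, A⁻(t) f(t,X)⟩ + ½|ĝ(t,u)|²_F ≤ k(1 + ‖X‖²)`, while
the extra drift term is at most `‖P'‖_∞ ‖X‖ ‖u‖`. Since `v̂(t,·)` is Lipschitz with
`‖v̂(t,0)‖` bounded, `‖X‖` grows at most affinely in `‖u‖`, so both bounds are
`O(1 + ‖u‖²)`.
-/

noncomputable def frobNorm {k l : Type*} [Fintype k] [Fintype l]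
    (B : Matrix k l ℝ) : ℝ :=
  Real.sqrt (∑ i, ∑ j, (B i j) ^ 2)

open Matrix

lemma frobNorm_nonneg {ι κ : Type*} [Fintype ι] [Fintype κ] (B : Matrix ι κ ℝ) :
    0 ≤ frobNorm B :=
  Real.sqrt_nonneg _

lemma norm_toEuclideanLin_le_frobNorm_mul {ι κ : Type*} [Fintype ι] [Fintype κ]
    [DecidableEq κ] (B : Matrix ι κ ℝ) (x : EuclideanSpace ℝ κ) :
    ‖toEuclideanLin B x‖ ≤ frobNorm B * ‖x‖ := by
  simp only [EuclideanSpace.norm_eq, Real.norm_eq_abs, sq_abs, frobNorm]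
  rw [← Real.sqrt_mul (by positivity), Finset.sum_mul]
  refine Real.sqrt_le_sqrt (Finset.sum_le_sum fun i _ => ?_)
  exact Finset.sum_mul_sq_le_sq_mul_sq _ _ _

lemma norm_add_apply_le_of_lipschitz {E : Type*} [SeminormedAddCommGroup E] {v : E → E}
    {L V : ℝ} (hv : ∀ x y, ‖v x - v y‖ ≤ L * ‖x - y‖) (hv₀ : ‖v 0‖ ≤ V) (u : E) :
    ‖u + v u‖ ≤ (1 + L) * ‖u‖ + V :=
  calc ‖u + v u‖ ≤ ‖u‖ + (‖v u - v 0‖ + ‖v 0‖) :=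
        (norm_add_le _ _).trans (add_le_add_right (norm_le_norm_sub_add _ _) _)
    _ ≤ ‖u‖ + (L * ‖u - 0‖ + V) := by gcongr; exact hv u 0
    _ = (1 + L) * ‖u‖ + V := by rw [sub_zero]; ring

lemma mul_le_mul_one_add_sq_of_le_affine {a b c V : ℝ} (ha : 0 ≤ a) (hc : 0 ≤ c)
    (hV : 0 ≤ V) (hb : b ≤ c * a + V) : b * a ≤ (c + V) * (1 + a ^ 2) := by
  have ha' : a ≤ 1 + a ^ 2 := by nlinarith [sq_nonneg (a - 1)]
  nlinarith [mul_le_mul_of_nonneg_right hb ha, mul_le_mul_of_nonneg_left ha' hV]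

lemma one_add_sq_le_of_le_affine {a b c V : ℝ} (hb₀ : 0 ≤ b) (hb : b ≤ c * a + V) :
    1 + b ^ 2 ≤ (1 + 2 * (c ^ 2 + V ^ 2)) * (1 + a ^ 2) := by
  have hsq : b ^ 2 ≤ (c * a + V) ^ 2 := pow_le_pow_left₀ hb₀ hb 2
  nlinarith [sq_nonneg (c * a - V), sq_nonneg (c * a), sq_nonneg V, sq_nonneg a,
    mul_nonneg (sq_nonneg V) (sq_nonneg a)]

theorem inherent_sde_monotone_general
    (n m : ℕ) (T : ℝ) (hT : 0 < T) (k : ℝ) (hk : 0 < k)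
    (A Aminus P' : ℝ → Matrix (Fin n) (Fin n) ℝ)
    (CP : ℝ)
    (hP : ∀ t ∈ Set.Icc (0 : ℝ) T, frobNorm (P' t) ≤ CP)
    (f : ℝ → EuclideanSpace ℝ (Fin n) → EuclideanSpace ℝ (Fin n))
    (g : ℝ → EuclideanSpace ℝ (Fin n) → Matrix (Fin n) (Fin m) ℝ)
    (hmono : ∀ t ∈ Set.Icc (0 : ℝ) T, ∀ X : EuclideanSpace ℝ (Fin n),
      (inner ℝ (Matrix.toEuclideanLin (Aminus t * A t) X)
          (Matrix.toEuclideanLin (Aminus t) (f t X)) : ℝ)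
        + 1 / 2 * (frobNorm (Aminus t * g t X)) ^ 2 ≤ k * (1 + ‖X‖ ^ 2))
    (vhat : ℝ → EuclideanSpace ℝ (Fin n) → EuclideanSpace ℝ (Fin n))
    (Lv : ℝ) (hLv : 0 ≤ Lv)
    (hvhat : ∀ t ∈ Set.Icc (0 : ℝ) T, ∀ u₁ u₂ : EuclideanSpace ℝ (Fin n),
      ‖vhat t u₁ - vhat t u₂‖ ≤ Lv * ‖u₁ - u₂‖)
    (V₀ : ℝ)
    (hV₀ : ∀ t ∈ Set.Icc (0 : ℝ) T, ‖vhat t 0‖ ≤ V₀)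
    (hproj : ∀ t ∈ Set.Icc (0 : ℝ) T, ∀ u : EuclideanSpace ℝ (Fin n),
      Matrix.toEuclideanLin (Aminus t * A t) (u + vhat t u) = u) :
    ∃ k₁ : ℝ, 0 < k₁ ∧ ∀ t ∈ Set.Icc (0 : ℝ) T, ∀ u : EuclideanSpace ℝ (Fin n),
      (inner ℝ u (Matrix.toEuclideanLin (P' t) (u + vhat t u)
          + Matrix.toEuclideanLin (Aminus t) (f t (u + vhat t u))) : ℝ)
        + 1 / 2 * (frobNorm (Aminus t * g t (u + vhat t u))) ^ 2
        ≤ k₁ * (1 + ‖u‖ ^ 2) := by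
  have h0T : (0 : ℝ) ∈ Set.Icc 0 T := ⟨le_rfl, hT.le⟩
  have hCP : 0 ≤ CP := (frobNorm_nonneg _).trans (hP 0 h0T)
  have hV : 0 ≤ V₀ := (norm_nonneg _).trans (hV₀ 0 h0T)
  refine ⟨CP * (1 + Lv + V₀) + k * (1 + 2 * ((1 + Lv) ^ 2 + V₀ ^ 2)), by positivity, ?_⟩
  intro t ht u
  set X := u + vhat t u
  have hX : ‖X‖ ≤ (1 + Lv) * ‖u‖ + V₀ :=
    norm_add_apply_le_of_lipschitz (hvhat t ht) (hV₀ t ht) u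
  have hdrift : inner ℝ u (toEuclideanLin (P' t) X) ≤ CP * (‖X‖ * ‖u‖) :=
    calc inner ℝ u (toEuclideanLin (P' t) X) ≤ ‖u‖ * (frobNorm (P' t) * ‖X‖) :=
          (real_inner_le_norm _ _).trans
            (by gcongr; exact norm_toEuclideanLin_le_frobNorm_mul _ _)
      _ = frobNorm (P' t) * (‖X‖ * ‖u‖) := by ring
      _ ≤ CP * (‖X‖ * ‖u‖) := by gcongr; exact hP t ht
  have hmonoX := hmono t ht X
  rw [hproj t ht u] at hmonoX
  calc _ = inner ℝ u (toEuclideanLin (P' t) X)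
          + (inner ℝ u (toEuclideanLin (Aminus t) (f t X))
            + 1 / 2 * frobNorm (Aminus t * g t X) ^ 2) := by rw [inner_add_right, add_assoc]
    _ ≤ CP * ((1 + Lv + V₀) * (1 + ‖u‖ ^ 2))
          + k * ((1 + 2 * ((1 + Lv) ^ 2 + V₀ ^ 2)) * (1 + ‖u‖ ^ 2)) := by
        have hcross := mul_le_mul_one_add_sq_of_le_affine (norm_nonneg u) (by positivity) hV hX
        have hsq := one_add_sq_le_of_le_affine (norm_nonneg X) hX
        gcongr
        · exact hdrift.trans (by gcongr)
        · exact hmonoX.trans (by gcongr)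
    _ = _ := by ring

/-- If the SDAE coefficients satisfy the monotone condition
`⟨A⁻(t)A(t)X, A⁻(t)f(t,X)⟩ + (1/2)|A⁻(t)g(t,X)|²_F ≤ k(1 + ‖X‖²)`, then the coefficients
`f̂, ĝ` of the inherent regular SDE satisfy a monotone condition
`⟨u, f̂(t,u)⟩ + (1/2)|ĝ(t,u)|²_F ≤ k₁(1 + ‖u‖²)` for some constant `k₁ > 0`. -/
theorem inherent_sde_monotone
    (n m : ℕ) (hn : 0 < n) (hm : 0 < m) (T : ℝ) (hT : 0 < T) (k : ℝ) (hk : 0 < k)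
    (A Aminus P' : ℝ → Matrix (Fin n) (Fin n) ℝ)
    (CP : ℝ)
    (hP : ∀ t ∈ Set.Icc (0 : ℝ) T, frobNorm (P' t) ≤ CP)
    (f : ℝ → EuclideanSpace ℝ (Fin n) → EuclideanSpace ℝ (Fin n))
    (g : ℝ → EuclideanSpace ℝ (Fin n) → Matrix (Fin n) (Fin m) ℝ)
    (hmono : ∀ t ∈ Set.Icc (0 : ℝ) T, ∀ X : EuclideanSpace ℝ (Fin n),
      (inner ℝ (Matrix.toEuclideanLin (Aminus t * A t) X)
          (Matrix.toEuclideanLin (Aminus t) (f t X)) : ℝ)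
        + 1 / 2 * (frobNorm (Aminus t * g t X)) ^ 2 ≤ k * (1 + ‖X‖ ^ 2))
    (vhat : ℝ → EuclideanSpace ℝ (Fin n) → EuclideanSpace ℝ (Fin n))
    (Lv : ℝ) (hLv : 0 ≤ Lv)
    (hvhat : ∀ t ∈ Set.Icc (0 : ℝ) T, ∀ u₁ u₂ : EuclideanSpace ℝ (Fin n),
      ‖vhat t u₁ - vhat t u₂‖ ≤ Lv * ‖u₁ - u₂‖)
    (V₀ : ℝ)
    (hV₀ : ∀ t ∈ Set.Icc (0 : ℝ) T, ‖vhat t 0‖ ≤ V₀)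
    (hproj : ∀ t ∈ Set.Icc (0 : ℝ) T, ∀ u : EuclideanSpace ℝ (Fin n),
      Matrix.toEuclideanLin (Aminus t * A t) (u + vhat t u) = u) :
    ∃ k₁ : ℝ, 0 < k₁ ∧ ∀ t ∈ Set.Icc (0 : ℝ) T, ∀ u : EuclideanSpace ℝ (Fin n),
      (inner ℝ u (Matrix.toEuclideanLin (P' t) (u + vhat t u)
          + Matrix.toEuclideanLin (Aminus t) (f t (u + vhat t u))) : ℝ)
        + 1 / 2 * (frobNorm (Aminus t * g t (u + vhat t u))) ^ 2
        ≤ k₁ * (1 + ‖u‖ ^ 2) :=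
  inherent_sde_monotone_general n m T hT k hk A Aminus P' CP hP f g hmono vhat Lv hLv hvhat V₀ hV₀
    hproj
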